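/- There exists a universal constant C such that for all 0 < t₁ < t₂ one has ∫₀^{t₁} ( ∫_ℝ |G_{t₂−s}(x) − G_{t₁−s}(x)| · |x|^{1/2} dx )² ds ≤ C (t₂ − t₁)^{3/2}. -/

import Mathlib

/-!
Parabolic scaling gives `∫ G_t(x) |x|^α dx = κ_α t^(α/2)`. For `0 < b ≤ a` the function
`√(b/a) G_b = (4πa)^(-1/2) exp(-x²/(4b))` lies below both `G_a` and `G_b`, and
`|u - v| ≤ u + v - 2m` for every common minorant `m`; hence
`∫ |G_a - G_b| |x|^(1/2) dx ≤ κ (a^(1/4) + b^(1/4) - 2 √(b/a) b^(1/4)) ≤ 4κ (a - b) a^(-3/4)`.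
With `a = t₂ - s`, `b = t₁ - s` the squared inner integral is at most
`16 κ² (t₂ - t₁)² (t₂ - s)^(-3/2)`, and integrating over `s ∈ (0, t₁)` gives `32 κ² (t₂ - t₁)^(3/2)`.
-/

open MeasureTheory Real Filter

/-- The heat kernel on `ℝ`: `G t x = (4πt)^(-1/2) exp(-x²/(4t))`. -/
noncomputable def G (t x : ℝ) : ℝ :=
  (4 * Real.pi * t) ^ (-(1:ℝ)/2) * Real.exp (-x ^ 2 / (4 * t))

open Set

theorem integrable_abs_rpow_mul_exp_neg_mul_sq {b : ℝ} (hb : 0 < b) {s : ℝ} (hs : -1 < s) :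
    Integrable fun x : ℝ => |x| ^ s * exp (-b * x ^ 2) := by
  have hf := integrable_rpow_mul_exp_neg_mul_sq hb hs
  refine (hf.norm.add hf.comp_neg.norm).mono'
    ((continuous_abs.measurable.pow_const s).mul (by fun_prop)).aestronglyMeasurable
    (ae_of_all _ fun x => ?_)
  rw [norm_of_nonneg (by positivity)]
  rcases le_total 0 x with hx | hx
  · rw [abs_of_nonneg hx]
    exact le_add_of_le_of_nonneg (le_norm_self _) (norm_nonneg _)
  · rw [abs_of_nonpos hx, ← neg_sq]
    exact le_add_of_nonneg_of_le (norm_nonneg _) (le_norm_self _)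

theorem intervalIntegral.integral_mono_of_nonneg_on_Ioo {f g : ℝ → ℝ} {a b : ℝ} (hab : a ≤ b)
    (hg : IntervalIntegrable g volume a b) (hf : ∀ x ∈ Ioo a b, 0 ≤ f x)
    (hfg : ∀ x ∈ Ioo a b, f x ≤ g x) : ∫ x in a..b, f x ≤ ∫ x in a..b, g x := by
  rw [intervalIntegral.integral_of_le hab, intervalIntegral.integral_of_le hab,
    integral_Ioc_eq_integral_Ioo, integral_Ioc_eq_integral_Ioo]
  exact integral_mono_of_nonneg (ae_restrict_of_forall_mem measurableSet_Ioo hf)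
    (hg.1.mono_set Ioo_subset_Ioc_self) (ae_restrict_of_forall_mem measurableSet_Ioo hfg)

lemma intervalIntegrable_sub_rpow {t₁ t₂ : ℝ} (h₁ : 0 ≤ t₁) (h₁₂ : t₁ < t₂) (r : ℝ) :
    IntervalIntegrable (fun s => (t₂ - s) ^ r) volume 0 t₁ := by
  refine ((continuousOn_const.sub continuousOn_id).rpow_const
    fun s hs => Or.inl ?_).intervalIntegrable
  rw [uIcc_of_le h₁] at hs
  exact (sub_pos.2 (hs.2.trans_lt h₁₂)).ne'

lemma integral_sub_rpow_le {t₁ t₂ r : ℝ} (h₁ : 0 ≤ t₁) (h₁₂ : t₁ < t₂) (hr : r < -1) :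
    ∫ s in 0..t₁, (t₂ - s) ^ r ≤ (t₂ - t₁) ^ (r + 1) / -(r + 1) := by
  have hδ : 0 < t₂ - t₁ := sub_pos.2 h₁₂
  have h0 : (0 : ℝ) ∉ uIcc (t₂ - t₁) t₂ := by
    rw [uIcc_of_le (by linarith)]
    exact fun h => hδ.not_ge h.1
  rw [intervalIntegral.integral_comp_sub_left (fun u => u ^ r), sub_zero,
    integral_rpow (Or.inr ⟨hr.ne, h0⟩), ← neg_div_neg_eq, neg_sub]
  exact div_le_div_of_nonneg_right (sub_le_self _ (rpow_nonneg (by linarith) _)) (by linarith)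

noncomputable def heatAbsMoment (α t : ℝ) : ℝ := ∫ x, G t x * |x| ^ α

lemma G_nonneg {t : ℝ} (ht : 0 ≤ t) (x : ℝ) : 0 ≤ G t x := by unfold G; positivity

lemma integrable_G_mul_abs_rpow {t α : ℝ} (ht : 0 < t) (hα : -1 < α) :
    Integrable fun x => G t x * |x| ^ α := by
  have h := (integrable_abs_rpow_mul_exp_neg_mul_sq (inv_pos.2 (mul_pos four_pos ht)) hα).const_mul
    ((4 * π * t) ^ (-(1:ℝ)/2))
  refine h.congr (ae_of_all _ fun x => ?_)
  simp only [G]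
  ring_nf

lemma G_sqrt_mul {t : ℝ} (ht : 0 < t) (y : ℝ) :
    G t (√t * y) = (√t)⁻¹ * G 1 y := by
  simp only [G, mul_pow, sq_sqrt ht.le, mul_one]
  rw [mul_rpow (by positivity) ht.le, sqrt_eq_rpow, ← rpow_neg ht.le,
    show -(t * y ^ 2) / (4 * t) = -y ^ 2 / 4 by field_simp]
  ring_nf

lemma heatAbsMoment_eq_mul_rpow {t : ℝ} (ht : 0 < t) (α : ℝ) :
    heatAbsMoment α t = heatAbsMoment α 1 * t ^ (α / 2) := by
  have hs : 0 < √t := sqrt_pos.2 ht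
  have key := Measure.integral_comp_mul_left (fun x => G t x * |x| ^ α) (√t)
  simp only [G_sqrt_mul ht, abs_mul, abs_of_pos hs, mul_rpow hs.le (abs_nonneg _),
    abs_of_pos (inv_pos.2 hs), smul_eq_mul, mul_mul_mul_comm _ (G 1 _), integral_const_mul] at key
  rw [sqrt_eq_rpow, ← rpow_mul ht.le, one_div_mul_eq_div] at key
  unfold heatAbsMoment
  field_simp at key
  linarith

lemma sqrt_div_mul_G_le {a b : ℝ} (hb : 0 < b) (hba : b ≤ a) (x : ℝ) :
    √(b / a) * G b x ≤ G a x := by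
  have ha : 0 < a := hb.trans_le hba
  have hc : √(b / a) * (4 * π * b) ^ (-(1:ℝ)/2) = (4 * π * a) ^ (-(1:ℝ)/2) := by
    rw [sqrt_eq_rpow, div_rpow hb.le ha.le, mul_rpow (by positivity) hb.le,
      mul_rpow (by positivity) ha.le, neg_div, rpow_neg hb.le, rpow_neg ha.le]
    field_simp
  have he : exp (-x ^ 2 / (4 * b)) ≤ exp (-x ^ 2 / (4 * a)) := by
    rw [exp_le_exp, neg_div, neg_div, neg_le_neg_iff]
    exact div_le_div_of_nonneg_left (sq_nonneg x) (by positivity) (by linarith)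
  calc √(b / a) * G b x = (4 * π * a) ^ (-(1:ℝ)/2) * exp (-x ^ 2 / (4 * b)) := by
        rw [G, ← mul_assoc, hc]
    _ ≤ G a x := mul_le_mul_of_nonneg_left he (by positivity)

lemma integral_abs_G_sub_G_mul_abs_rpow_le {a b α : ℝ} (hb : 0 < b) (hba : b ≤ a)
    (hα : -1 < α) :
    ∫ x, |G a x - G b x| * |x| ^ α
      ≤ heatAbsMoment α 1 * (a ^ (α / 2) + (1 - 2 * √(b / a)) * b ^ (α / 2)) := by
  have ha : 0 < a := hb.trans_le hba
  have hr : √(b / a) ≤ 1 := sqrt_le_one.2 ((div_le_one ha).2 hba)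
  have hpt (x : ℝ) : |G a x - G b x| * |x| ^ α
      ≤ G a x * |x| ^ α + (1 - 2 * √(b / a)) * (G b x * |x| ^ α) := by
    have hma := sqrt_div_mul_G_le hb hba x
    have hmb : √(b / a) * G b x ≤ G b x := mul_le_of_le_one_left (G_nonneg hb.le x) hr
    have habs : |G a x - G b x| ≤ G a x + G b x - 2 * (√(b / a) * G b x) :=
      abs_sub_le_iff.2 ⟨by linarith, by linarith⟩
    calc |G a x - G b x| * |x| ^ α ≤ (G a x + G b x - 2 * (√(b / a) * G b x)) * |x| ^ α :=
          mul_le_mul_of_nonneg_right habs (by positivity)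
      _ = _ := by ring
  have hGa := integrable_G_mul_abs_rpow ha hα
  have hGb := integrable_G_mul_abs_rpow hb hα
  calc ∫ x, |G a x - G b x| * |x| ^ α
      ≤ ∫ x, G a x * |x| ^ α + (1 - 2 * √(b / a)) * (G b x * |x| ^ α) :=
        integral_mono_of_nonneg (ae_of_all _ fun x => by positivity)
          (hGa.add (hGb.const_mul _)) (ae_of_all _ hpt)
    _ = heatAbsMoment α a + (1 - 2 * √(b / a)) * heatAbsMoment α b := by
        rw [integral_add hGa (hGb.const_mul _), integral_const_mul]; rfl
    _ = _ := by rw [heatAbsMoment_eq_mul_rpow ha, heatAbsMoment_eq_mul_rpow hb]; ring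

/-- With `a = q⁴`, `b = p⁴` the difference of the two sides is
`(q - p) (3q³ + 2q²p + 2qp² + 4p³) / q³`. -/
lemma quarter_rpow_overlap_le {a b : ℝ} (hb : 0 < b) (hba : b ≤ a) :
    a ^ (1 / 4 : ℝ) + (1 - 2 * √(b / a)) * b ^ (1 / 4 : ℝ) ≤ 4 * (a - b) * a ^ (-3 / 4 : ℝ) := by
  have fourth_root {c : ℝ} (hc : 0 < c) : ∃ r, 0 < r ∧ c = r ^ 4 :=
    ⟨c ^ (1 / 4 : ℝ), by positivity, by rw [← rpow_natCast, ← rpow_mul hc.le]; norm_num⟩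
  obtain ⟨p, hp, rfl⟩ := fourth_root hb
  obtain ⟨q, hq, rfl⟩ := fourth_root (hb.trans_le hba)
  have hpq : p ≤ q := le_of_pow_le_pow_left₀ (by norm_num) hq.le hba
  have hsqrt : √(p ^ 4 / q ^ 4) = p ^ 2 / q ^ 2 := by
    rw [show p ^ 4 / q ^ 4 = (p ^ 2 / q ^ 2) ^ 2 by ring, sqrt_sq (by positivity)]
  rw [hsqrt, ← rpow_natCast_mul hp.le, ← rpow_natCast_mul hq.le, ← rpow_natCast_mul hq.le]
  norm_num
  have key : 4 * (q ^ 4 - p ^ 4) * (q ^ 3)⁻¹ - (q + (1 - 2 * (p ^ 2 / q ^ 2)) * p)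
      = (q - p) * (3 * q ^ 3 + 2 * q ^ 2 * p + 2 * q * p ^ 2 + 4 * p ^ 3) / q ^ 3 := by
    field_simp; ring
  rw [← sub_nonneg, key]
  exact div_nonneg (mul_nonneg (sub_nonneg.2 hpq) (by positivity)) (by positivity)

lemma integral_abs_G_sub_G_mul_sqrt_abs_le {a b : ℝ} (hb : 0 < b) (hba : b ≤ a) :
    ∫ x, |G a x - G b x| * |x| ^ ((1:ℝ)/2)
      ≤ 4 * heatAbsMoment (1/2) 1 * (a - b) * a ^ (-3 / 4 : ℝ) := by
  have hκ : 0 ≤ heatAbsMoment (1/2) 1 :=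
    integral_nonneg fun x => mul_nonneg (G_nonneg zero_le_one x) (by positivity)
  calc ∫ x, |G a x - G b x| * |x| ^ ((1:ℝ)/2)
      ≤ heatAbsMoment (1/2) 1 * (a ^ (1 / 4 : ℝ) + (1 - 2 * √(b / a)) * b ^ (1 / 4 : ℝ)) := by
        convert integral_abs_G_sub_G_mul_abs_rpow_le hb hba (by norm_num : (-1:ℝ) < 1/2)
          using 4 <;> norm_num
    _ ≤ heatAbsMoment (1/2) 1 * (4 * (a - b) * a ^ (-3 / 4 : ℝ)) :=
        mul_le_mul_of_nonneg_left (quarter_rpow_overlap_le hb hba) hκ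
    _ = _ := by ring

lemma sq_integral_abs_G_sub_G_mul_sqrt_abs_le {a b : ℝ} (hb : 0 < b) (hba : b ≤ a) :
    (∫ x, |G a x - G b x| * |x| ^ ((1:ℝ)/2)) ^ 2
      ≤ 16 * heatAbsMoment (1/2) 1 ^ 2 * (a - b) ^ 2 * a ^ (-3 / 2 : ℝ) := by
  have hsq : (a ^ (-3 / 4 : ℝ)) ^ 2 = a ^ (-3 / 2 : ℝ) := by
    rw [← rpow_natCast, ← rpow_mul (hb.le.trans hba)]; norm_num
  calc _ ≤ (4 * heatAbsMoment (1/2) 1 * (a - b) * a ^ (-3 / 4 : ℝ)) ^ 2 :=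
        pow_le_pow_left₀ (integral_nonneg fun x => by positivity)
          (integral_abs_G_sub_G_mul_sqrt_abs_le hb hba) 2
    _ = _ := by rw [mul_pow, hsq]; ring

theorem heat_kernel_time_increment_half :
    ∃ C : ℝ, 0 < C ∧ ∀ t₁ t₂ : ℝ, 0 < t₁ → t₁ < t₂ →
      ∫ s in (0:ℝ)..t₁,
          (∫ x : ℝ, |G (t₂ - s) x - G (t₁ - s) x| * |x| ^ ((1:ℝ)/2)) ^ 2
        ≤ C * (t₂ - t₁) ^ ((3:ℝ)/2) := by
  set κ := heatAbsMoment (1/2) 1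
  refine ⟨32 * κ ^ 2 + 1, by positivity, fun t₁ t₂ h₁ h₁₂ => ?_⟩
  have hδ : 0 < t₂ - t₁ := sub_pos.2 h₁₂
  have h32 : (t₂ - t₁) ^ 2 * (t₂ - t₁) ^ (-(1 / 2) : ℝ) = (t₂ - t₁) ^ ((3:ℝ)/2) := by
    rw [← rpow_natCast, ← rpow_add hδ]; norm_num
  calc ∫ s in (0:ℝ)..t₁, (∫ x : ℝ, |G (t₂ - s) x - G (t₁ - s) x| * |x| ^ ((1:ℝ)/2)) ^ 2
      ≤ ∫ s in (0:ℝ)..t₁, 16 * κ ^ 2 * (t₂ - t₁) ^ 2 * (t₂ - s) ^ (-3 / 2 : ℝ) :=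
        intervalIntegral.integral_mono_of_nonneg_on_Ioo h₁.le
          ((intervalIntegrable_sub_rpow h₁.le h₁₂ _).const_mul _) (fun _ _ => by positivity)
          fun s hs => by
            simpa only [sub_sub_sub_cancel_right] using
              sq_integral_abs_G_sub_G_mul_sqrt_abs_le (sub_pos.2 hs.2) (sub_le_sub_right h₁₂.le s)
    _ ≤ 16 * κ ^ 2 * (t₂ - t₁) ^ 2 * ((t₂ - t₁) ^ (-3 / 2 + 1 : ℝ) / -(-3 / 2 + 1)) := by
        rw [intervalIntegral.integral_const_mul]
        gcongr
        exact integral_sub_rpow_le h₁.le h₁₂ (by norm_num)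
    _ = 32 * κ ^ 2 * (t₂ - t₁) ^ ((3:ℝ)/2) := by
        rw [show (-3 / 2 + 1 : ℝ) = -(1 / 2) by norm_num, ← h32]
        ring
    _ ≤ (32 * κ ^ 2 + 1) * (t₂ - t₁) ^ ((3:ℝ)/2) := by gcongr; linarith
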